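/- arXiv:math/0212228 — 5 statements merged into one kernel-verified Lean document; each statement's English description precedes it below -/
import Mathlib

section
/- Every Poisson bracket on the matrix algebra Mₙ(ℂ) with n ≥ 2 is of the form {a,b} = k·(ab − ba) for some constant k ∈ ℂ. -/
/-!
Antisymmetry turns the Leibniz rule into a biderivation, and expanding `{x u, y v}` in the two
possible orders gives `[x, y] {u, v} = {x, y} [u, v]`. In `Mₙ(ℂ)`, `n ≥ 2`, some commutator
`c = [x₀, y₀]` is invertible: the permutation matrix of a cyclic shift has zero diagonal, and every
zero-diagonal matrix is a commutator with a diagonal matrix of distinct entries. Hence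
`{x, y} = [x, y] N` with `N = {x₀, y₀} c⁻¹`, and the identity applied to `(x₀, y₀, u, v)` shows
that `N` commutes with all commutators, in particular with all off-diagonal matrix units, so `N` is a
scalar.
-/

open Matrix

section Biderivation

variable {A : Type*} [Ring A]

structure IsBiderivation (P : A → A → A) : Prop where
  map_mul_left : ∀ a b c, P (a * b) c = a * P b c + P a c * b
  map_mul_right : ∀ a b c, P a (b * c) = b * P a c + P a b * c

namespace IsBiderivation

variable {P : A → A → A}

theorem of_antisymm (hanti : ∀ a b, P a b = -P b a)
    (hleib : ∀ a b c, P a (b * c) = b * P a c + P a b * c) : IsBiderivation P where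
  map_mul_left a b c := by
    rw [hanti, hleib, hanti b, hanti a]
    noncomm_ring
  map_mul_right := hleib

theorem lie_mul_eq_mul_lie (hP : IsBiderivation P) (x y u v : A) :
    ⁅x, y⁆ * P u v = P x y * ⁅u, v⁆ := by
  have h₁ : P (x * u) (y * v) = y * (x * P u v + P x v * u) + (x * P u y + P x y * u) * v := by
    rw [hP.map_mul_right, hP.map_mul_left x u v, hP.map_mul_left x u y]
  have h₂ : P (x * u) (y * v) = x * (y * P u v + P u y * v) + (y * P x v + P x y * v) * u := by
    rw [hP.map_mul_left, hP.map_mul_right u y v, hP.map_mul_right x y v]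
  rw [Ring.lie_def, Ring.lie_def, ← sub_eq_zero]
  calc _ = x * (y * P u v + P u y * v) + (y * P x v + P x y * v) * u
        - (y * (x * P u v + P x v * u) + (x * P u y + P x y * u) * v) := by noncomm_ring
    _ = 0 := by rw [← h₁, ← h₂, sub_self]

theorem exists_eq_lie_mul_of_isUnit (hP : IsBiderivation P) {x₀ y₀ : A} (hc : IsUnit ⁅x₀, y₀⁆) :
    ∃ N, ∀ x y, P x y = ⁅x, y⁆ * N :=
  ⟨P x₀ y₀ * ↑hc.unit⁻¹, fun x y => by
    rw [← mul_assoc, hP.lie_mul_eq_mul_lie, mul_assoc, IsUnit.mul_val_inv, mul_one]⟩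

theorem commute_lie_of_eq_lie_mul (hP : IsBiderivation P) {N x₀ y₀ : A}
    (hN : ∀ x y, P x y = ⁅x, y⁆ * N) (hc : IsUnit ⁅x₀, y₀⁆) (u v : A) : Commute ⁅u, v⁆ N := by
  have h := hP.lie_mul_eq_mul_lie x₀ y₀ u v
  rw [hN u v, hN x₀ y₀, mul_assoc] at h
  exact hc.mul_left_cancel h

end IsBiderivation

end Biderivation

namespace Matrix

variable {n : Type*} [DecidableEq n]

theorem single_eq_lie_single {α : Type*} [Ring α] [Fintype n] {i j : n} (hij : i ≠ j) (c : α) :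
    single i j c = ⁅single i i (1 : α), single i j c⁆ := by
  rw [Ring.lie_def, single_mul_single_same, one_mul, single_mul_single_of_ne (h := hij.symm),
    sub_zero]

theorem mem_range_scalar_of_commute_lie {α : Type*} [Ring α] [Fintype n] {N : Matrix n n α}
    (hN : ∀ u v : Matrix n n α, Commute ⁅u, v⁆ N) : N ∈ Set.range (scalar n) :=
  mem_range_scalar_of_commute_single fun i j hij => by
    simpa only [← single_eq_lie_single hij] using hN (single i i 1) (single i j 1)

theorem lie_diagonal_of_div_sub {K : Type*} [Field K] [Fintype n] {d : n → K}
    (hd : Function.Injective d) {Z : Matrix n n K} (hZ : ∀ i, Z i i = 0) :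
    ⁅diagonal d, of fun i j => Z i j / (d i - d j)⁆ = Z := by
  ext i j
  rw [Ring.lie_def, sub_apply, diagonal_mul, mul_diagonal, of_apply]
  obtain rfl | hij := eq_or_ne i j
  · simp [hZ]
  · field_simp [sub_ne_zero.mpr (hd.ne hij)]

theorem isUnit_permMatrix {R : Type*} [CommRing R] [Fintype n] (σ : Equiv.Perm n) :
    IsUnit (σ.permMatrix R) := by
  rw [isUnit_iff_isUnit_det, det_permutation]
  exact (Equiv.Perm.sign σ).isUnit.map (Int.castRingHom R)

theorem exists_isUnit_lie (K : Type*) [Field K] [CharZero K] {n : ℕ} (hn : 2 ≤ n) :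
    ∃ x y : Matrix (Fin n) (Fin n) K, IsUnit ⁅x, y⁆ := by
  have hσ (i : Fin n) : finRotate n i ≠ i :=
    Equiv.Perm.mem_support.mp (by simp [support_finRotate_of_le hn])
  have hd : Function.Injective fun i : Fin n => (i : K) :=
    fun i j h => Fin.ext (Nat.cast_injective h)
  have h := lie_diagonal_of_div_sub hd (Z := (finRotate n).permMatrix K)
    (by simp [hσ, -finRotate_apply])
  exact ⟨_, _, (congrArg IsUnit h).mpr (isUnit_permMatrix _)⟩

end Matrix

theorem matrix_poisson_bracket_eq_scalar_commutator_general (n : ℕ) (hn : 2 ≤ n)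
    (P : Matrix (Fin n) (Fin n) ℂ →ₗ[ℂ] Matrix (Fin n) (Fin n) ℂ →ₗ[ℂ] Matrix (Fin n) (Fin n) ℂ)
    (hanti : ∀ a b, P a b = - P b a)
    (hleib : ∀ a b c, P a (b * c) = b * P a c + P a b * c) :
    ∃ k : ℂ, ∀ a b : Matrix (Fin n) (Fin n) ℂ, P a b = k • (a * b - b * a) := by
  have hP : IsBiderivation fun a b => P a b := .of_antisymm hanti hleib
  obtain ⟨x₀, y₀, hc⟩ := Matrix.exists_isUnit_lie ℂ hn
  obtain ⟨N, hN⟩ := hP.exists_eq_lie_mul_of_isUnit hc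
  obtain ⟨k, rfl⟩ := Matrix.mem_range_scalar_of_commute_lie (hP.commute_lie_of_eq_lie_mul hN hc)
  refine ⟨k, fun a b => ?_⟩
  rw [hN, Ring.lie_def, Matrix.scalar_apply, ← Matrix.smul_one_eq_diagonal, Matrix.mul_smul,
    mul_one]

/-- Every Poisson bracket on Mₙ(ℂ), n ≥ 2, is a constant multiple of the commutator. -/
theorem matrix_poisson_bracket_eq_scalar_commutator (n : ℕ) (hn : 2 ≤ n)
    (P : Matrix (Fin n) (Fin n) ℂ →ₗ[ℂ] Matrix (Fin n) (Fin n) ℂ →ₗ[ℂ] Matrix (Fin n) (Fin n) ℂ)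
    (hanti : ∀ a b, P a b = - P b a)
    (hjac : ∀ a b c, P (P a b) c + P (P b c) a + P (P c a) b = 0)
    (hleib : ∀ a b c, P a (b * c) = b * P a c + P a b * c) :
    ∃ k : ℂ, ∀ a b : Matrix (Fin n) (Fin n) ℂ, P a b = k • (a * b - b * a) :=
  matrix_poisson_bracket_eq_scalar_commutator_general n hn P hanti hleib
end

section
/- Let A be an associative unital algebra with a Poisson bracket {,}. For every z in the center Z(A) and all a, b ∈ A, one has {z, ab − ba} = 0. -/
/-- For a Poisson bracket on A and z central, {z, ab − ba} = 0. -/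
theorem poisson_center_commutator {A : Type*} [Ring A] [Algebra ℂ A]
    (P : A →ₗ[ℂ] A →ₗ[ℂ] A)
    (hanti : ∀ a b : A, P a b = - P b a)
    (hjac : ∀ a b c : A, P (P a b) c + P (P b c) a + P (P c a) b = 0)
    (hleib : ∀ a b c : A, P a (b * c) = b * P a c + P a b * c)
    (z : A) (hz : z ∈ Subring.center A) (a b : A) :
    P z (a * b - b * a) = 0 := by
  -- z commutes with everything
  have hzc : ∀ x : A, x * z = z * x := fun x => (Subring.mem_center_iff.mp hz) x
  -- Leibniz in the first argument
  have h1 : ∀ x y c : A, P (x * y) c = x * P y c + P x c * y := by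
    intro x y c
    rw [hanti (x * y) c, hleib c x y, hanti c y, hanti c x]
    simp [mul_neg, neg_mul, neg_add]
    exact add_comm _ _
  -- {z, c} is central for every c
  have hcen : ∀ c x : A, P z c * x = x * P z c := by
    intro c x
    have e1 : P (z * x) c = z * P x c + P z c * x := h1 z x c
    have e2 : P (x * z) c = x * P z c + P x c * z := h1 x z c
    rw [hzc x, e1, hzc (P x c), add_comm (x * P z c)] at e2
    exact add_left_cancel e2
  have hab : P z (a * b) = a * P z b + P z a * b := hleib z a b
  have hba : P z (b * a) = b * P z a + P z b * a := hleib z b a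
  rw [map_sub, hab, hba, hcen a b, hcen b a]
  abel
end

section
/- Let A be an associative unital algebra with a Poisson bracket, and suppose the subalgebra generated by commutators [A,A] equals A. Then the center Z(A) lies in the center of the Lie algebra (A, {,}): {z, a} = 0 for all z ∈ Z(A), a ∈ A. -/
/-- If the subalgebra generated by commutators is all of A, then the center of A
    is central for any Poisson bracket: {z, a} = 0 for central z. -/
theorem poisson_center_central_of_comm_generates {A : Type*} [Ring A] [Algebra ℂ A]
    (hcomm : NonUnitalAlgebra.adjoin ℂ {x : A | ∃ a b : A, x = a * b - b * a} = ⊤)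
    (P : A →ₗ[ℂ] A →ₗ[ℂ] A)
    (hanti : ∀ a b : A, P a b = - P b a)
    (hjac : ∀ a b c : A, P (P a b) c + P (P b c) a + P (P c a) b = 0)
    (hleib : ∀ a b c : A, P a (b * c) = b * P a c + P a b * c)
    (z : A) (hz : z ∈ Subring.center A) (a : A) :
    P z a = 0 := by
  have hzc : ∀ g : A, g * z = z * g := fun g => (Subring.mem_center_iff.mp hz) g
  -- Leibniz in the first argument
  have hleib1 : ∀ a b c : A, P (a * b) c = a * P b c + P a c * b := by
    intro a b c
    have := hleib c a b
    have h1 : P (a * b) c = - P c (a * b) := hanti _ _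
    rw [h1, this, neg_add, neg_mul_eq_mul_neg, ← hanti, ← neg_mul, ← hanti]
  -- P z b is central for all b
  have hcent : ∀ b g : A, P z b * g = g * P z b := by
    intro b g
    have h1 : P (z * g) b = z * P g b + P z b * g := hleib1 z g b
    have h2 : P (g * z) b = g * P z b + P g b * z := hleib1 g z b
    have h3 : z * g = g * z := (hzc g).symm
    rw [h3, h2, hzc (P g b)] at h1
    -- h1 : g * P z b + z * P g b = z * P g b + P z b * g
    rw [add_comm (g * P z b)] at h1
    exact (add_left_cancel h1).symm
  -- P z kills commutators
  have hkill : ∀ x ∈ {x : A | ∃ a b : A, x = a * b - b * a}, P z x = 0 := by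
    rintro x ⟨u, v, rfl⟩
    have : P z (u * v - v * u) = P z (u * v) - P z (v * u) := by
      rw [map_sub]
    rw [this, hleib z u v, hleib z v u, hcent v u, hcent u v]
    abel
  -- induction over the adjoin
  have ha : a ∈ NonUnitalAlgebra.adjoin ℂ {x : A | ∃ a b : A, x = a * b - b * a} := by
    rw [hcomm]; trivial
  induction ha using NonUnitalAlgebra.adjoin_induction with
  | mem x hx => exact hkill x hx
  | add x y _ _ hx hy => rw [map_add, hx, hy, add_zero]
  | smul c x _ hx => rw [map_smul, hx, smul_zero]
  | mul x y _ _ hx hy => rw [hleib z x y, hx, hy, mul_zero, zero_mul, add_zero]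
  | zero => exact map_zero _
end

section
/- Let A be an associative unital ℂ-algebra such that the subalgebra generated by commutators equals A, and such that every derivation of A vanishing on Z(A) is inner. Then for every Poisson bracket on A and every a ∈ A, the Hamiltonian derivation ham(a) = {a,·} is inner: there exists b ∈ A with {a,x} = bx − xb for all x ∈ A. -/
/-- If commutators generate A and every derivation vanishing on the center is inner,
    then every Hamiltonian derivation of any Poisson bracket on A is inner. -/
theorem hamiltonian_derivation_inner {A : Type*} [Ring A] [Algebra ℂ A]
    (hcomm : NonUnitalAlgebra.adjoin ℂ {x : A | ∃ a b : A, x = a * b - b * a} = ⊤)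
    (hinner : ∀ X : A →ₗ[ℂ] A, (∀ a b : A, X (a * b) = X a * b + a * X b) →
      (∀ z ∈ Subring.center A, X z = 0) →
      ∃ b : A, ∀ x : A, X x = b * x - x * b)
    (P : A →ₗ[ℂ] A →ₗ[ℂ] A)
    (hanti : ∀ a b : A, P a b = - P b a)
    (hjac : ∀ a b c : A, P (P a b) c + P (P b c) a + P (P c a) b = 0)
    (hleib : ∀ a b c : A, P a (b * c) = b * P a c + P a b * c)
    (a : A) :
    ∃ b : A, ∀ x : A, P a x = b * x - x * b := by
  -- Step 1: for z central, P u z is central.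
  have hcen : ∀ z ∈ Subring.center A, ∀ u x : A, P u z * x = x * P u z := by
    intro z hz u x
    have hz' : ∀ w : A, z * w = w * z := fun w =>
      (Subring.mem_center_iff.mp hz w).symm
    have h1 := hleib u z x
    have h2 := hleib u x z
    rw [hz' x] at h1
    rw [h1] at h2
    have h3 : z * P u x = P u x * z := hz' (P u x)
    -- h2 : z * P u x + P u z * x = x * P u z + P u x * z
    rw [h3] at h2
    have h4 : P u z * x + P u x * z = x * P u z + P u x * z := by
      rw [add_comm (P u z * x)]; exact h2
    exact add_right_cancel h4
  -- Step 2: for z central, P x z = 0 for all x.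
  have hkill : ∀ z ∈ Subring.center A, ∀ x : A, P x z = 0 := by
    intro z hz
    -- the kernel set as a non-unital subalgebra
    let K : NonUnitalSubalgebra ℂ A :=
      { carrier := {x : A | P x z = 0}
        add_mem' := by
          intro x y hx hy
          simp only [Set.mem_setOf_eq] at *
          rw [map_add, LinearMap.add_apply, hx, hy, add_zero]
        zero_mem' := by
          simp only [Set.mem_setOf_eq, map_zero, LinearMap.zero_apply]
        smul_mem' := by
          intro c x hx
          simp only [Set.mem_setOf_eq] at *
          rw [map_smul, LinearMap.smul_apply, hx, smul_zero]
        mul_mem' := by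
          intro x y hx hy
          simp only [Set.mem_setOf_eq] at *
          have : P (x * y) z = - P z (x * y) := by rw [hanti]
          rw [this, hleib]
          rw [show P z y = - P y z by rw [hanti], show P z x = - P x z by rw [hanti],
            hx, hy]
          simp }
    have hsub : {x : A | ∃ b c : A, x = b * c - c * b} ⊆ K := by
      rintro x ⟨b, c, rfl⟩
      show P (b * c - c * b) z = 0
      have h1 : P (b * c - c * b) z = - P z (b * c - c * b) := by rw [hanti]
      rw [h1, map_sub, hleib, hleib]
      have hb : P z b = - P b z := by rw [hanti]
      have hc : P z c = - P c z := by rw [hanti]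
      have hbc : c * P z b = P z b * c := by
        rw [hb]; rw [neg_mul, mul_neg, hcen z hz b c]
      have hcb : b * P z c = P z c * b := by
        rw [hc]; rw [neg_mul, mul_neg, hcen z hz c b]
      rw [hbc, hcb]
      abel
    have : NonUnitalAlgebra.adjoin ℂ {x : A | ∃ b c : A, x = b * c - c * b} ≤ K :=
      NonUnitalAlgebra.adjoin_le hsub
    rw [hcomm] at this
    intro x
    exact this (by trivial : x ∈ (⊤ : NonUnitalSubalgebra ℂ A))
  -- Step 3: apply hinner to X = P a.
  obtain ⟨b, hb⟩ := hinner (P a)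
    (fun u v => by rw [hleib]; exact add_comm _ _)
    (fun z hz => hkill z hz a)
  exact ⟨b, hb⟩
end

section
/- Let f : Mₙ(ℂ) → Mₙ(ℂ) (n ≥ 2) be a linear map such that [f(a),b] = [a,f(b)] for all a,b and such that for every idempotent p there is a scalar g(p) with f(p) − g(p)·p ∈ ℂ·1. If p, q are idempotents with pq ≠ qp, then g(p) = g(q). -/
/-- If f : Mₙ(ℂ) → Mₙ(ℂ) (n ≥ 2) is linear with [f(a),b] = [a,f(b)] and on each
    idempotent p we have f(p) = g(p)·p modulo scalars, then noncommuting idempotents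
    get the same scalar g. -/
theorem hamiltonian_scalar_constant_on_noncommuting_idempotents (n : ℕ) (hn : 2 ≤ n)
    (f : Matrix (Fin n) (Fin n) ℂ →ₗ[ℂ] Matrix (Fin n) (Fin n) ℂ)
    (hsym : ∀ a b, f a * b - b * f a = a * f b - f b * a)
    (g : Matrix (Fin n) (Fin n) ℂ → ℂ)
    (hg : ∀ p : Matrix (Fin n) (Fin n) ℂ, p * p = p →
      ∃ c : ℂ, f p = g p • p + c • (1 : Matrix (Fin n) (Fin n) ℂ))
    (p q : Matrix (Fin n) (Fin n) ℂ)
    (hp : p * p = p) (hq : q * q = q) (hpq : p * q ≠ q * p) :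
    g p = g q := by
  obtain ⟨c, hc⟩ := hg p hp
  obtain ⟨d, hd⟩ := hg q hq
  have h := hsym p q
  rw [hc, hd] at h
  have h2 : (g p - g q) • (p * q - q * p) = 0 := by
    have : g p • (p * q - q * p) = g q • (p * q - q * p) := by
      have lhs : (g p • p + c • (1 : Matrix (Fin n) (Fin n) ℂ)) * q
          - q * (g p • p + c • 1) = g p • (p * q - q * p) := by
        simp [add_mul, mul_add, smul_mul_assoc, mul_smul_comm, smul_sub]
      have rhs : p * (g q • q + d • (1 : Matrix (Fin n) (Fin n) ℂ))
          - (g q • q + d • 1) * p = g q • (p * q - q * p) := by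
        simp [add_mul, mul_add, smul_mul_assoc, mul_smul_comm, smul_sub]
      rw [lhs, rhs] at h
      exact h
    rw [sub_smul, this, sub_self]
  rcases smul_eq_zero.mp h2 with h3 | h3
  · exact sub_eq_zero.mp h3
  · exact absurd (sub_eq_zero.mp h3) hpq
end
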